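/- The map P_M(V) = (1/2)V − (1/2) M V^+ M on ℝ^{2n×2n}, for M ∈ Sp(2n), is idempotent, fixes each tangent vector of Sp(2n) at M, and its kernel is the normal space {S J^T M : S skew-symmetric}; i.e., P_M is the orthogonal projection onto T_M Sp(2n) with respect to the right-invariant metric. -/
import Mathlib


open Matrix

/-- The standard symplectic matrix `J_{2n} = [[0, I_n], [-I_n, 0]]`. -/
def symplJ (n : ℕ) : Matrix (Fin n ⊕ Fin n) (Fin n ⊕ Fin n) ℝ :=
  Matrix.fromBlocks 0 1 (-1) 0

/-- The symplectic inverse `X⁺ = Jᵀ Xᵀ J`. -/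
def symplInv {n : ℕ} (X : Matrix (Fin n ⊕ Fin n) (Fin n ⊕ Fin n) ℝ) :
    Matrix (Fin n ⊕ Fin n) (Fin n ⊕ Fin n) ℝ :=
  (symplJ n)ᵀ * Xᵀ * symplJ n

/-- The projection `P_M(V) = (1/2)V − (1/2) M V⁺ M`. -/
noncomputable def projP {n : ℕ}
    (M V : Matrix (Fin n ⊕ Fin n) (Fin n ⊕ Fin n) ℝ) :
    Matrix (Fin n ⊕ Fin n) (Fin n ⊕ Fin n) ℝ :=
  (1 / 2 : ℝ) • V - (1 / 2 : ℝ) • (M * symplInv V * M)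

lemma symplJ_transpose (n : ℕ) : (symplJ n)ᵀ = -symplJ n := by
  simp [symplJ, Matrix.fromBlocks_transpose, Matrix.fromBlocks_neg]

lemma symplJ_mul_self (n : ℕ) : symplJ n * symplJ n = -1 := by
  have h : symplJ n * symplJ n
      = Matrix.fromBlocks (-1) 0 0 (-1) := by
    simp [symplJ, Matrix.fromBlocks_multiply]
  rw [h, ← Matrix.fromBlocks_one, Matrix.fromBlocks_neg, neg_zero]

lemma symplJ_mul_transpose (n : ℕ) : symplJ n * (symplJ n)ᵀ = 1 := by
  rw [symplJ_transpose, Matrix.mul_neg, symplJ_mul_self]; simp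

lemma symplJ_transpose_mul (n : ℕ) : (symplJ n)ᵀ * symplJ n = 1 := by
  rw [symplJ_transpose, Matrix.neg_mul, symplJ_mul_self]; simp

lemma symplJ_mul_mul {n : ℕ} (A : Matrix (Fin n ⊕ Fin n) (Fin n ⊕ Fin n) ℝ) :
    symplJ n * (symplJ n * A) = -A := by
  rw [← Matrix.mul_assoc, symplJ_mul_self]; simp

lemma symplInv_mul {n : ℕ} (X Y : Matrix (Fin n ⊕ Fin n) (Fin n ⊕ Fin n) ℝ) :
    symplInv (X * Y) = symplInv Y * symplInv X := by
  simp only [symplInv, Matrix.transpose_mul, Matrix.mul_assoc]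
  rw [← Matrix.mul_assoc (symplJ n) (symplJ n)ᵀ, symplJ_mul_transpose,
    Matrix.one_mul]

lemma symplInv_transpose {n : ℕ}
    (X : Matrix (Fin n ⊕ Fin n) (Fin n ⊕ Fin n) ℝ) :
    (symplInv X)ᵀ = (symplJ n)ᵀ * X * symplJ n := by
  simp only [symplInv, Matrix.transpose_mul, Matrix.transpose_transpose,
    Matrix.mul_assoc]

lemma symplInv_symplInv {n : ℕ} (X : Matrix (Fin n ⊕ Fin n) (Fin n ⊕ Fin n) ℝ) :
    symplInv (symplInv X) = X := by
  rw [symplInv, symplInv_transpose, symplJ_transpose]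
  simp only [Matrix.neg_mul, Matrix.mul_neg, neg_neg, Matrix.mul_assoc,
    symplJ_mul_self, Matrix.mul_one]
  rw [symplJ_mul_mul]
  simp

lemma symplInv_smul {n : ℕ} (a : ℝ)
    (X : Matrix (Fin n ⊕ Fin n) (Fin n ⊕ Fin n) ℝ) :
    symplInv (a • X) = a • symplInv X := by
  simp [symplInv, Matrix.transpose_smul, Matrix.smul_mul, Matrix.mul_smul]

lemma symplInv_sub {n : ℕ} (X Y : Matrix (Fin n ⊕ Fin n) (Fin n ⊕ Fin n) ℝ) :
    symplInv (X - Y) = symplInv X - symplInv Y := by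
  simp [symplInv, Matrix.transpose_sub, Matrix.sub_mul, Matrix.mul_sub]

theorem projP_is_orthogonal_projection {n : ℕ}
    (M : Matrix (Fin n ⊕ Fin n) (Fin n ⊕ Fin n) ℝ)
    (hM : symplInv M * M = 1) :
    (∀ V, projP M (projP M V) = projP M V) ∧
    (∀ Δ, symplInv Δ * M + symplInv M * Δ = 0 → projP M Δ = Δ) ∧
    (∀ V, projP M V = 0 ↔
      ∃ S : Matrix (Fin n ⊕ Fin n) (Fin n ⊕ Fin n) ℝ,
        Sᵀ = -S ∧ V = S * (symplJ n)ᵀ * M) := by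
  have hMM : M * symplInv M = 1 := mul_eq_one_comm.mp hM
  have key : ∀ V : Matrix (Fin n ⊕ Fin n) (Fin n ⊕ Fin n) ℝ,
      M * symplInv (projP M V) * M
        = (1/2 : ℝ) • (M * symplInv V * M) - (1/2 : ℝ) • V := by
    intro V
    rw [projP, symplInv_sub, symplInv_smul, symplInv_smul, symplInv_mul,
      symplInv_mul, symplInv_symplInv]
    simp only [Matrix.mul_sub, Matrix.sub_mul, Matrix.mul_smul, Matrix.smul_mul]
    rw [← Matrix.mul_assoc M (symplInv M) (V * symplInv M), hMM,
      Matrix.one_mul, Matrix.mul_assoc V (symplInv M) M, hM, Matrix.mul_one]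
  refine ⟨?_, ?_, ?_⟩
  · intro V
    rw [projP, key, projP]
    module
  · intro Δ hΔ
    have h : symplInv Δ * M = -(symplInv M * Δ) := by
      rw [eq_neg_iff_add_eq_zero]; exact hΔ
    have h2 : M * symplInv Δ * M = -Δ := by
      rw [Matrix.mul_assoc, h, Matrix.mul_neg, ← Matrix.mul_assoc, hMM,
        Matrix.one_mul]
    rw [projP, h2]
    module
  · intro V
    constructor
    · intro h
      rw [projP, sub_eq_zero] at h
      have hV : V = M * symplInv V * M :=
        smul_right_injective _ (by norm_num : (1/2 : ℝ) ≠ 0) h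
      refine ⟨V * symplInv M * symplJ n, ?_, ?_⟩
      · have hST : (V * symplInv M * symplJ n)ᵀ
            = -(M * symplJ n * Vᵀ) := by
          rw [Matrix.transpose_mul, Matrix.transpose_mul, symplInv_transpose,
            symplJ_transpose]
          simp only [Matrix.neg_mul, Matrix.mul_neg, neg_neg, Matrix.mul_assoc]
          rw [symplJ_mul_mul]
        have hS : V * symplInv M * symplJ n = M * symplJ n * Vᵀ := by
          have h1 : V * symplInv M = M * symplInv V := by
            conv_lhs => rw [hV]
            rw [Matrix.mul_assoc (M * symplInv V) M (symplInv M), hMM,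
              Matrix.mul_one]
          rw [h1, symplInv, symplJ_transpose]
          simp only [Matrix.neg_mul, Matrix.mul_neg, neg_neg,
            Matrix.mul_assoc, symplJ_mul_self, Matrix.mul_one]
        rw [hST, hS]
      · rw [Matrix.mul_assoc (V * symplInv M), symplJ_mul_transpose,
          Matrix.mul_one, Matrix.mul_assoc, hM, Matrix.mul_one]
    · rintro ⟨S, hS, hV⟩
      have hVinv : symplInv V = -(symplInv M * (S * symplJ n)) := by
        rw [hV, symplInv, Matrix.transpose_mul, Matrix.transpose_mul,
          Matrix.transpose_transpose, hS]
        simp only [symplInv, Matrix.neg_mul, Matrix.mul_neg, neg_neg,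
          Matrix.mul_assoc]
      have hVplus : M * symplInv V * M = V := by
        rw [hVinv, Matrix.mul_neg, ← Matrix.mul_assoc M (symplInv M), hMM,
          Matrix.one_mul, hV, symplJ_transpose]
        simp [Matrix.mul_assoc, Matrix.mul_neg, Matrix.neg_mul]
      rw [projP, hVplus]
      simp
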